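/- (Performance Difference Lemma) For a finite-horizon MDP with horizon H, cost function c, and two time-dependent policies π = {π₁,…,π_H} and π* = {π*₁,…,π*_H}, the difference in expected total cost satisfies J(π) − J(π*) = Σ_{h=1}^{H} E_{x ∼ μ_h^π} [ E_{a ∼ π_h(·|x)} Q*_h(x,a) − V*_h(x) ], where μ_h^π is the state distribution at time h under π, and Q*_h, V*_h are the state-action and state value functions of π*. -/
import Mathlib

lemma pdl_step_eq {X A : Type*} [Fintype X] [Fintype A]
    (ν : X → ℝ) (σ : X → A → ℝ) (P : X → A → X → ℝ) (w : X → ℝ) :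
    ∑ x, ν x * ∑ a, σ x a * ∑ x', P x a x' * w x'
      = ∑ x', (∑ x, ∑ a, ν x * σ x a * P x a x') * w x' := by
  calc ∑ x, ν x * ∑ a, σ x a * ∑ x', P x a x' * w x'
      = ∑ x, ∑ a, ∑ x', ν x * σ x a * P x a x' * w x' := by
        refine Finset.sum_congr rfl fun x _ => ?_
        rw [Finset.mul_sum]
        refine Finset.sum_congr rfl fun a _ => ?_
        rw [← mul_assoc, Finset.mul_sum]
        exact Finset.sum_congr rfl fun x' _ => by ring
    _ = ∑ x, ∑ x', ∑ a, ν x * σ x a * P x a x' * w x' :=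
        Finset.sum_congr rfl fun x _ => Finset.sum_comm
    _ = ∑ x', ∑ x, ∑ a, ν x * σ x a * P x a x' * w x' := Finset.sum_comm
    _ = ∑ x', (∑ x, ∑ a, ν x * σ x a * P x a x') * w x' := by
        refine Finset.sum_congr rfl fun x' _ => ?_
        rw [Finset.sum_mul]
        exact Finset.sum_congr rfl fun x _ => (Finset.sum_mul _ _ _).symm

lemma pdl_value {X A : Type*} [Fintype X] [Fintype A]
    (H : ℕ) (P : X → A → X → ℝ) (c : X → ℝ) (πs : ℕ → X → A → ℝ)
    (μs : ℕ → X → ℝ)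
    (hμs : ∀ h x', μs (h + 1) x' = ∑ x, ∑ a, μs h x * πs h x a * P x a x')
    (V : ℕ → X → ℝ)
    (hVH : ∀ x, V H x = c x)
    (hV : ∀ h, 1 ≤ h → h < H → ∀ x,
      V h x = c x + ∑ a, πs h x a * ∑ x', P x a x' * V (h + 1) x') :
    ∀ d, d < H → ∑ x, μs (H - d) x * V (H - d) x
      = ∑ k ∈ Finset.Icc (H - d) H, ∑ x, μs k x * c x := by
  intro d
  induction d with
  | zero =>
    intro _
    simp [hVH]
  | succ d ih =>
    intro hd
    set h := H - (d + 1) with hh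
    have h1 : 1 ≤ h := by omega
    have h2 : h < H := by omega
    have h3 : h + 1 = H - d := by omega
    have hIcc : Finset.Icc h H = insert h (Finset.Icc (h + 1) H) := by
      ext k; simp only [Finset.mem_Icc, Finset.mem_insert]; omega
    have key : ∑ x, μs h x * V h x
        = (∑ x, μs h x * c x) + ∑ x', μs (h + 1) x' * V (h + 1) x' := by
      calc ∑ x, μs h x * V h x
          = ∑ x, (μs h x * c x + μs h x * ∑ a, πs h x a * ∑ x', P x a x' * V (h + 1) x') := by
            refine Finset.sum_congr rfl fun x _ => ?_
            rw [hV h h1 h2 x]; ring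
        _ = (∑ x, μs h x * c x) + ∑ x, μs h x * ∑ a, πs h x a * ∑ x', P x a x' * V (h + 1) x' := by
            rw [Finset.sum_add_distrib]
        _ = (∑ x, μs h x * c x) + ∑ x', μs (h + 1) x' * V (h + 1) x' := by
            rw [pdl_step_eq]
            refine congrArg _ (Finset.sum_congr rfl fun x' _ => ?_)
            rw [hμs h x']
    rw [key, h3, ih (by omega), hIcc, Finset.sum_insert (by simp), ← h3]

/-- Performance Difference Lemma for finite-horizon MDPs:
`J(π) − J(π*) = Σ_{h=1}^{H} E_{x∼μ_h^π}[ E_{a∼π_h(·|x)} Q*_h(x,a) − V*_h(x) ]`. -/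
theorem stmt_4 {X A : Type*} [Fintype X] [Fintype A]
    (H : ℕ) (hH : 1 ≤ H)
    (ρ : X → ℝ) (hρ : ∑ x, ρ x = 1)
    (P : X → A → X → ℝ) (hP : ∀ x a, ∑ x', P x a x' = 1)
    (c : X → ℝ)
    (π πs : ℕ → X → A → ℝ)
    (hπ : ∀ h x, ∑ a, π h x a = 1) (hπs : ∀ h x, ∑ a, πs h x a = 1)
    -- state distributions under π and π*
    (μ μs : ℕ → X → ℝ)
    (hμ1 : μ 1 = ρ) (hμs1 : μs 1 = ρ)
    (hμ : ∀ h x', μ (h + 1) x' = ∑ x, ∑ a, μ h x * π h x a * P x a x')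
    (hμs : ∀ h x', μs (h + 1) x' = ∑ x, ∑ a, μs h x * πs h x a * P x a x')
    -- value functions of π* (Bellman equations)
    (V : ℕ → X → ℝ) (Q : ℕ → X → A → ℝ)
    (hVH : ∀ x, V H x = c x)
    (hV : ∀ h, 1 ≤ h → h < H → ∀ x,
      V h x = c x + ∑ a, πs h x a * ∑ x', P x a x' * V (h + 1) x')
    (hQH : ∀ x a, Q H x a = c x)
    (hQ : ∀ h, h < H → ∀ x a, Q h x a = c x + ∑ x', P x a x' * V (h + 1) x')
    -- expected cumulative costs
    (J Js : ℝ)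
    (hJ : J = ∑ h ∈ Finset.Icc 1 H, ∑ x, μ h x * c x)
    (hJs : Js = ∑ h ∈ Finset.Icc 1 H, ∑ x, μs h x * c x) :
    J - Js = ∑ h ∈ Finset.Icc 1 H, ∑ x, μ h x *
      ((∑ a, π h x a * Q h x a) - V h x) := by
  set f : ℕ → ℝ := fun h => ∑ x, μ h x * V h x with hf
  set g : ℕ → ℝ := fun h => ∑ x, μ h x * c x with hg
  -- Js = f 1
  have hJsf : Js = f 1 := by
    have := pdl_value H P c πs μs hμs V hVH hV (H - 1) (by omega)
    rw [show H - (H - 1) = 1 by omega] at this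
    rw [hJs, ← this]
    simp only [hf, hμ1, hμs1]
  -- term at H is zero
  have hTH : ∑ x, μ H x * ((∑ a, π H x a * Q H x a) - V H x) = 0 := by
    refine Finset.sum_eq_zero fun x _ => ?_
    simp only [hQH, hVH, ← Finset.sum_mul, hπ H x]
    ring
  -- term at h < H
  have hT : ∀ h, 1 ≤ h → h < H →
      ∑ x, μ h x * ((∑ a, π h x a * Q h x a) - V h x) = g h + f (h + 1) - f h := by
    intro h h1 h2
    have e : ∑ x, μ h x * ((∑ a, π h x a * Q h x a) - V h x)
        = ∑ x, (μ h x * c x + μ h x * (∑ a, π h x a * ∑ x', P x a x' * V (h + 1) x')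
            - μ h x * V h x) := by
      refine Finset.sum_congr rfl fun x _ => ?_
      have : ∑ a, π h x a * Q h x a
          = c x + ∑ a, π h x a * ∑ x', P x a x' * V (h + 1) x' := by
        simp only [hQ h h2, mul_add, Finset.sum_add_distrib, ← Finset.sum_mul, hπ h x]
        ring
      rw [this]; ring
    rw [e, Finset.sum_sub_distrib, Finset.sum_add_distrib, pdl_step_eq]
    have hstep : ∑ x', (∑ x, ∑ a, μ h x * π h x a * P x a x') * V (h + 1) x'
        = f (h + 1) := by
      refine Finset.sum_congr rfl fun x' _ => ?_
      rw [← hμ h x']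
    rw [hstep]
  -- split sums
  have hsplit : ∀ T : ℕ → ℝ, ∑ h ∈ Finset.Icc 1 H, T h
      = (∑ h ∈ Finset.Icc 1 (H - 1), T h) + T H := by
    intro T
    conv_lhs => rw [show H = (H - 1) + 1 by omega]
    rw [Finset.sum_Icc_succ_top (by omega), show H - 1 + 1 = H by omega]
  rw [hsplit, hTH, add_zero]
  have hmid : ∑ h ∈ Finset.Icc 1 (H - 1), ∑ x, μ h x * ((∑ a, π h x a * Q h x a) - V h x)
      = (∑ h ∈ Finset.Icc 1 (H - 1), g h) + (f H - f 1) := by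
    have e1 : ∑ h ∈ Finset.Icc 1 (H - 1), ∑ x, μ h x * ((∑ a, π h x a * Q h x a) - V h x)
        = ∑ h ∈ Finset.Icc 1 (H - 1), (g h + (f (h + 1) - f h)) := by
      refine Finset.sum_congr rfl fun h hh => ?_
      simp only [Finset.mem_Icc] at hh
      rw [hT h hh.1 (by omega)]; ring
    rw [e1, Finset.sum_add_distrib]
    congr 1
    have hIco : Finset.Icc 1 (H - 1) = Finset.Ico 1 H := by
      ext k; simp only [Finset.mem_Icc, Finset.mem_Ico]; omega
    rw [hIco, Finset.sum_Ico_eq_sum_range]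
    calc ∑ i ∈ Finset.range (H - 1), (f (1 + i + 1) - f (1 + i))
        = f (1 + (H - 1)) - f (1 + 0) := Finset.sum_range_sub (fun i => f (1 + i)) (H - 1)
      _ = f H - f 1 := by rw [show 1 + (H - 1) = H by omega]
  rw [hmid]
  have hfH : f H = g H := Finset.sum_congr rfl fun x _ => by rw [hVH]
  rw [hJ, hJsf, hsplit g, hfH]
  ring
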